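/- If (λ, x) ∈ ℝ × ℝ^{n+m} is a solution of the eigenvalue system (EV) and n ≥ 3, then λ + x_n = min(ā_n + x_1 + x_{n+1} − λ − x_{n+m}, a_{n−1} + a_{n−2} − λ + x_{n−2}); that is, the interior variable x_{n−1} can be eliminated from the junction equation. -/
import Mathlib


open Finset

/-- The eigenvalue system (EV) for the 2D-traffic dynamics: `lam` is the
additive eigenvalue and `x : ℕ → ℝ` carries the coordinates `x 1, …, x (n+m)`. -/
def EVsol (n m : ℕ) (a : ℕ → ℝ) (lam : ℝ) (x : ℕ → ℝ) : Prop :=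
  (∀ i : ℕ, ((2 ≤ i ∧ i ≤ n - 1) ∨ (n + 2 ≤ i ∧ i ≤ n + m - 1)) →
      lam + x i = min (a (i - 1) + x (i - 1)) ((1 - a i) + x (i + 1))) ∧
  lam + x n = min ((1 - (a n + a (n + m))) + x 1 + x (n + 1) - lam - x (n + m))
      (a (n - 1) + x (n - 1)) ∧
  lam + x (n + m) = min ((1 - (a n + a (n + m))) + x 1 + x (n + 1) - x n)
      (a (n + m - 1) + x (n + m - 1)) ∧
  lam + x 1 = min (a n + (x n + x (n + m)) / 2) ((1 - a 1) + x 2) ∧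
  lam + x (n + 1) = min (a (n + m) + (x n + x (n + m)) / 2) ((1 - a (n + 1)) + x (n + 2))

theorem stmt3 (n m : ℕ) (hn : 2 ≤ n) (hm : 2 ≤ m) (a : ℕ → ℝ)
    (ha : ∀ i : ℕ, 1 ≤ i → i ≤ n + m → 0 ≤ a i ∧ a i ≤ 1)
    (hprio : a n + a (n + m) ≤ 1) (hn3 : 3 ≤ n)
    (lam : ℝ) (x : ℕ → ℝ) (hEV : EVsol n m a lam x) :
    lam + x n = min ((1 - (a n + a (n + m))) + x 1 + x (n + 1) - lam - x (n + m))
      (a (n - 1) + a (n - 2) - lam + x (n - 2)) := by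
  obtain ⟨h1, h2, h3, h4, h5⟩ := hEV
  -- interior equation at i = n-1
  have hint : lam + x (n - 1) = min (a (n - 2) + x (n - 2)) ((1 - a (n - 1)) + x n) := by
    have h := h1 (n - 1) (Or.inl ⟨by omega, le_refl _⟩)
    have e1 : n - 1 - 1 = n - 2 := by omega
    have e2 : n - 1 + 1 = n := by omega
    rw [e1, e2] at h
    exact h
  -- lam ≤ 2/7
  have b2 : lam + x n ≤ (1 - (a n + a (n + m))) + x 1 + x (n + 1) - lam - x (n + m) :=
    h2.le.trans (min_le_left _ _)
  have b3 : lam + x (n + m) ≤ (1 - (a n + a (n + m))) + x 1 + x (n + 1) - x n :=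
    h3.le.trans (min_le_left _ _)
  have b4 : lam + x 1 ≤ a n + (x n + x (n + m)) / 2 := h4.le.trans (min_le_left _ _)
  have b5 : lam + x (n + 1) ≤ a (n + m) + (x n + x (n + m)) / 2 := h5.le.trans (min_le_left _ _)
  have hlam : lam ≤ 2 / 7 := by linarith
  apply le_antisymm
  · apply le_min
    · exact h2.le.trans (min_le_left _ _)
    · have hc : lam + x n ≤ a (n - 1) + x (n - 1) := h2.le.trans (min_le_right _ _)
      have hd : lam + x (n - 1) ≤ a (n - 2) + x (n - 2) := hint.le.trans (min_le_left _ _)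
      linarith
  · rcases min_cases ((1 - (a n + a (n + m))) + x 1 + x (n + 1) - lam - x (n + m))
        (a (n - 1) + x (n - 1)) with ⟨he, _⟩ | ⟨he, _⟩
    · rw [h2, he]; exact min_le_left _ _
    · rw [h2, he]
      rcases min_cases (a (n - 2) + x (n - 2)) ((1 - a (n - 1)) + x n) with ⟨hf, _⟩ | ⟨hf, hf2⟩
      · have hh : lam + x (n - 1) = a (n - 2) + x (n - 2) := by rw [hint, hf]
        exact (min_le_right _ _).trans (le_of_eq (by linarith))
      · -- then lam + x (n-1) = 1 - a (n-1) + x n, so a(n-1)+x(n-1) = 1 - lam + x n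
        -- combined with he : lam + x n = a(n-1) + x(n-1) (from h2), get lam = 1/2, contradiction
        exfalso
        have hc : lam + x n = a (n - 1) + x (n - 1) := by rw [h2, he]
        have : lam + x (n - 1) = (1 - a (n - 1)) + x n := by rw [hint, hf]
        linarith
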